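/- (Proposition 2.1, strong convexity inequality for 1 < p < 2) For every p with 1 < p < 2 there exists a constant Ĉ_p > 0 such that for all η, η' ∈ ℝ^N with |η| + |η'| > 0 one has H(η)^p ≥ H(η')^p + p a_p(η') · (η − η') + Ĉ_p (H(η) + H(η'))^{p−2} H(η − η')². -/

import Mathlib

/-!
Along the segment `γ t = η' + t (η - η')` put `g t = H (γ t) ^ p`. Where `γ` avoids the origin,
`g'' = p H^(p-2) ((p-1) (DH·v)² + H D²H[v,v])`. Splitting `v` into a multiple of `γ t` and a part
tangent to the level set of `H`, Euler's identity controls the first piece by `(DH·v)²` and the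
ellipticity of `D²H` on tangent vectors controls the second, so `g'' ≥ c H(γ)^(p-2) |v|²`.
Since `p ≤ 2` and `H(γ) ≲ H η + H η'`, this is `≳ (H η + H η')^(p-2) H(η - η')²`, and Taylor's
formula gives the inequality. If the segment passes through the origin then `η = -r η'` with
`r ≥ 0` (or `η' = 0`), and homogeneity reduces everything to a one-variable inequality in `r`.
-/

open scoped RealInnerProductSpace Classical

/-- The anisotropic vector field `a_p(η) = H(η)^(p-1) ∇H(η)` (and `a_p 0 = 0`). -/
noncomputable def aVec {N : ℕ} (H : EuclideanSpace ℝ (Fin N) → ℝ) (p : ℝ) :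
    EuclideanSpace ℝ (Fin N) → EuclideanSpace ℝ (Fin N) :=
  fun η => if η = 0 then 0 else (H η) ^ (p - 1) • gradient H η

open Set

theorem rpow_sub_two_mul_sq {x p : ℝ} (hx : 0 ≤ x) (hp : p ≠ 0) : x ^ (p - 2) * x ^ 2 = x ^ p := by
  rw [← Real.rpow_natCast, ← Real.rpow_add' hx (by simpa using hp)]
  norm_num

theorem sub_one_div_two_mul_one_add_rpow_le {p r : ℝ} (hp1 : 1 ≤ p) (hp2 : p ≤ 2) (hr : 0 ≤ r) :
    (p - 1) / 2 * (1 + r) ^ p ≤ r ^ p + p * r + (p - 1) := by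
  have hconv : (1 + r) ^ p ≤ 2 ^ (p - 1) * (1 + r ^ p) := by
    lift r to NNReal using hr
    have h := NNReal.rpow_add_le_mul_rpow_add_rpow 1 r hp1
    rw [NNReal.one_rpow] at h
    exact_mod_cast h
  have htwo : (2 : ℝ) ^ (p - 1) ≤ 2 := by
    simpa using Real.rpow_le_rpow_of_exponent_le one_le_two (by linarith : p - 1 ≤ 1)
  have hrp : 0 ≤ r ^ p := Real.rpow_nonneg hr p
  calc (p - 1) / 2 * (1 + r) ^ p ≤ (p - 1) / 2 * (2 * (1 + r ^ p)) := by
        have : 0 ≤ p - 1 := by linarith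
        gcongr
        exact hconv.trans (by gcongr)
    _ ≤ r ^ p + p * r + (p - 1) := by nlinarith

theorem monotoneOn_Icc_of_hasDerivAt_nonneg {f f' : ℝ → ℝ} {a b : ℝ}
    (hf : ∀ t ∈ Icc a b, HasDerivAt f (f' t) t) (hf' : ∀ t ∈ Icc a b, 0 ≤ f' t) :
    MonotoneOn f (Icc a b) :=
  monotoneOn_of_hasDerivWithinAt_nonneg (convex_Icc a b)
    (fun t ht => (hf t ht).continuousAt.continuousWithinAt)
    (fun t ht => (hf t (interior_subset ht)).hasDerivWithinAt)
    (fun t ht => hf' t (interior_subset ht))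

theorem add_add_half_le_of_le_second_deriv {f f' f'' : ℝ → ℝ} {B : ℝ}
    (hf : ∀ t ∈ Icc (0 : ℝ) 1, HasDerivAt f (f' t) t)
    (hf' : ∀ t ∈ Icc (0 : ℝ) 1, HasDerivAt f' (f'' t) t)
    (hB : ∀ t ∈ Icc (0 : ℝ) 1, B ≤ f'' t) :
    f 0 + f' 0 + B / 2 ≤ f 1 := by
  have h0 : (0 : ℝ) ∈ Icc (0 : ℝ) 1 := left_mem_Icc.2 zero_le_one
  have hmono' : MonotoneOn (fun t => f' t - B * t) (Icc 0 1) :=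
    monotoneOn_Icc_of_hasDerivAt_nonneg
      (fun t ht => ((hf' t ht).sub ((hasDerivAt_id t).const_mul B)).congr_deriv (by simp))
      (fun t ht => sub_nonneg.2 (hB t ht))
  have hmono : MonotoneOn (fun t => f t - f' 0 * t - B * t ^ 2 / 2) (Icc 0 1) := by
    refine monotoneOn_Icc_of_hasDerivAt_nonneg (f' := fun t => f' t - B * t - f' 0)
      (fun t ht => ?_) (fun t ht => ?_)
    · refine (((hf t ht).fun_sub ((hasDerivAt_id t).const_mul (f' 0))).fun_sub
        (((hasDerivAt_pow 2 t).const_mul B).div_const 2)).congr_deriv ?_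
      simp only [mul_one, Nat.cast_ofNat]
      ring
    · simpa using hmono' h0 ht ht.1
  have := hmono h0 (right_mem_Icc.2 zero_le_one) zero_le_one
  simp only at this
  linarith

section Homogeneous

variable {E : Type*} [NormedAddCommGroup E] [NormedSpace ℝ E] {H : E → ℝ}

theorem fderiv_smul_of_homogeneous (hhom : ∀ t : ℝ, 0 ≤ t → ∀ x, H (t • x) = t * H x)
    {t : ℝ} (ht : 0 < t) (x : E) : fderiv ℝ H (t • x) = fderiv ℝ H x := by
  have h : (fun y => H (t • y)) = t • H := funext fun y => hhom t ht.le y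
  have := fderiv_comp_smul (𝕜 := ℝ) (f := H) (x := x) t
  rw [h, fderiv_const_smul_field] at this
  exact (smul_right_injective _ ht.ne' this).symm

theorem smul_fderiv_fderiv_smul_of_homogeneous
    (hhom : ∀ t : ℝ, 0 ≤ t → ∀ x, H (t • x) = t * H x) {t : ℝ} (ht : 0 < t) (x : E) :
    t • fderiv ℝ (fderiv ℝ H) (t • x) = fderiv ℝ (fderiv ℝ H) x := by
  have h : (fun y => fderiv ℝ H (t • y)) = fderiv ℝ H :=
    funext (fderiv_smul_of_homogeneous hhom ht)
  rw [← fderiv_comp_smul, h]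

theorem hasDerivAt_comp_smul_one {F : Type*} [NormedAddCommGroup F] [NormedSpace ℝ F]
    {f : E → F} {x : E} (hx : DifferentiableAt ℝ f x) :
    HasDerivAt (fun t : ℝ => f (t • x)) (fderiv ℝ f x x) 1 := by
  have := hx.hasFDerivAt.comp_hasDerivAt_of_eq (1 : ℝ)
    ((hasDerivAt_id (1 : ℝ)).smul_const x) (one_smul ℝ x).symm
  simpa [Function.comp_def] using this

theorem fderiv_apply_self_of_homogeneous
    (hhom : ∀ t : ℝ, 0 ≤ t → ∀ x, H (t • x) = t * H x) {x : E}
    (hx : DifferentiableAt ℝ H x) : fderiv ℝ H x x = H x := by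
  have heq : (fun t : ℝ => t * H x) =ᶠ[nhds 1] fun t => H (t • x) := by
    filter_upwards [lt_mem_nhds one_pos] with t ht
    exact (hhom t ht.le x).symm
  refine (hasDerivAt_comp_smul_one hx).unique ?_
  simpa using ((hasDerivAt_id (1 : ℝ)).mul_const (H x)).congr_of_eventuallyEq heq.symm

theorem fderiv_fderiv_apply_self_of_homogeneous
    (hhom : ∀ t : ℝ, 0 ≤ t → ∀ x, H (t • x) = t * H x) {x : E}
    (hx : DifferentiableAt ℝ (fderiv ℝ H) x) : fderiv ℝ (fderiv ℝ H) x x = 0 := by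
  have heq : (fun t : ℝ => fderiv ℝ H (t • x)) =ᶠ[nhds 1] fun _ => fderiv ℝ H x := by
    filter_upwards [lt_mem_nhds one_pos] with t ht
    exact fderiv_smul_of_homogeneous hhom ht x
  exact ((hasDerivAt_comp_smul_one hx).congr_of_eventuallyEq heq.symm).unique
    (hasDerivAt_const 1 _)

theorem lam_mul_norm_sq_le_mul_fderiv_fderiv
    (hhom : ∀ t : ℝ, 0 ≤ t → ∀ x, H (t • x) = t * H x) {lam : ℝ}
    (hell : ∀ ξ, H ξ = 1 → ∀ ζ, fderiv ℝ H ξ ζ = 0 →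
      lam * ‖ζ‖ ^ 2 ≤ fderiv ℝ (fderiv ℝ H) ξ ζ ζ)
    {ξ w : E} (hξ : 0 < H ξ) (hw : fderiv ℝ H ξ w = 0) :
    lam * ‖w‖ ^ 2 ≤ H ξ * fderiv ℝ (fderiv ℝ H) ξ w w := by
  set σ := (H ξ)⁻¹ • ξ
  have hξσ : H ξ • σ = ξ := smul_inv_smul₀ hξ.ne' ξ
  have hσ : H σ = 1 := by rw [hhom _ (inv_nonneg.2 hξ.le), inv_mul_cancel₀ hξ.ne']
  have hDσ : fderiv ℝ H σ = fderiv ℝ H ξ := by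
    rw [← fderiv_smul_of_homogeneous hhom hξ σ, hξσ]
  have h := hell σ hσ w (by rw [hDσ, hw])
  rwa [← smul_fderiv_fderiv_smul_of_homogeneous hhom hξ σ, hξσ] at h

theorem fderiv_fderiv_add_smul_self_of_homogeneous
    (hhom : ∀ t : ℝ, 0 ≤ t → ∀ x, H (t • x) = t * H x) {x : E} (hx : ContDiffAt ℝ 2 H x)
    (w : E) (a : ℝ) :
    fderiv ℝ (fderiv ℝ H) x (w + a • x) (w + a • x) = fderiv ℝ (fderiv ℝ H) x w w := by
  have hD2 : DifferentiableAt ℝ (fderiv ℝ H) x :=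
    (hx.fderiv_right (m := 1) (by norm_num)).differentiableAt one_ne_zero
  have hrad := fderiv_fderiv_apply_self_of_homogeneous hhom hD2
  have hsymm := hx.isSymmSndFDerivAt (by simp) x w
  simp [hrad, ← hsymm]

theorem min_mul_norm_sq_le_of_homogeneous
    (hhom : ∀ t : ℝ, 0 ≤ t → ∀ x, H (t • x) = t * H x) {lam : ℝ} (hlam : 0 ≤ lam)
    (hell : ∀ ξ, H ξ = 1 → ∀ ζ, fderiv ℝ H ξ ζ = 0 →
      lam * ‖ζ‖ ^ 2 ≤ fderiv ℝ (fderiv ℝ H) ξ ζ ζ)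
    {m q : ℝ} (hm : 0 ≤ m) (hq : 0 ≤ q) {ξ : E} (hmξ : m * ‖ξ‖ ≤ H ξ) (hξ : 0 < H ξ)
    (hξ2 : ContDiffAt ℝ 2 H ξ) (v : E) :
    min lam (q * m ^ 2) / 2 * ‖v‖ ^ 2 ≤
      q * fderiv ℝ H ξ v ^ 2 + H ξ * fderiv ℝ (fderiv ℝ H) ξ v v := by
  set a := fderiv ℝ H ξ v / H ξ
  set w := v - a • ξ
  have hv : v = w + a • ξ := (sub_add_cancel v _).symm
  have hw : fderiv ℝ H ξ w = 0 := by
    rw [map_sub, map_smul, fderiv_apply_self_of_homogeneous hhom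
      (hξ2.differentiableAt two_ne_zero), smul_eq_mul, div_mul_cancel₀ _ hξ.ne', sub_self]
  have hlow := lam_mul_norm_sq_le_mul_fderiv_fderiv hhom hell hξ hw
  have hquad : fderiv ℝ (fderiv ℝ H) ξ v v = fderiv ℝ (fderiv ℝ H) ξ w w := by
    rw [hv, fderiv_fderiv_add_smul_self_of_homogeneous hhom hξ2]
  have hnorm : ‖v‖ ^ 2 ≤ 2 * (‖w‖ ^ 2 + (a * ‖ξ‖) ^ 2) := by
    have h := norm_add_le w (a • ξ)
    rw [← hv, norm_smul, Real.norm_eq_abs] at h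
    have hsq : (|a| * ‖ξ‖) ^ 2 = (a * ‖ξ‖) ^ 2 := by rw [mul_pow, sq_abs, mul_pow]
    nlinarith [pow_le_pow_left₀ (norm_nonneg v) h 2, sq_nonneg (‖w‖ - |a| * ‖ξ‖)]
  have hradial : m ^ 2 * (a * ‖ξ‖) ^ 2 ≤ fderiv ℝ H ξ v ^ 2 := by
    have hHξ : (m * ‖ξ‖) ^ 2 ≤ H ξ ^ 2 := pow_le_pow_left₀ (by positivity) hmξ 2
    calc m ^ 2 * (a * ‖ξ‖) ^ 2 = a ^ 2 * (m * ‖ξ‖) ^ 2 := by ring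
      _ ≤ a ^ 2 * H ξ ^ 2 := by gcongr
      _ = fderiv ℝ H ξ v ^ 2 := by rw [← mul_pow, div_mul_cancel₀ _ hξ.ne']
  set κ := min lam (q * m ^ 2)
  have hκ : 0 ≤ κ := le_min hlam (by positivity)
  have hκw : κ * ‖w‖ ^ 2 ≤ lam * ‖w‖ ^ 2 :=
    mul_le_mul_of_nonneg_right (min_le_left _ _) (sq_nonneg _)
  have hκξ : κ * (a * ‖ξ‖) ^ 2 ≤ q * (m ^ 2 * (a * ‖ξ‖) ^ 2) := by
    rw [← mul_assoc]; exact mul_le_mul_of_nonneg_right (min_le_right _ _) (sq_nonneg _)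
  rw [hquad]
  nlinarith

theorem exists_mul_norm_le_and_le_mul_norm [FiniteDimensional ℝ E]
    (hhom : ∀ t : ℝ, 0 ≤ t → ∀ x, H (t • x) = t * H x) (hpos : ∀ x, x ≠ 0 → 0 < H x)
    (hcont : ContinuousOn H {0}ᶜ) :
    ∃ m M : ℝ, 0 < m ∧ 0 < M ∧ ∀ x, m * ‖x‖ ≤ H x ∧ H x ≤ M * ‖x‖ := by
  have hH0 : H 0 = 0 := by simpa using hhom 0 le_rfl 0
  rcases subsingleton_or_nontrivial E with hE | hE
  · exact ⟨1, 1, one_pos, one_pos, fun x => by simp [Subsingleton.elim x 0, hH0]⟩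
  have hS : Metric.sphere (0 : E) 1 ⊆ {0}ᶜ := fun x hx h => by simp_all
  have hne := (NormedSpace.sphere_nonempty (x := (0 : E))).2 zero_le_one
  obtain ⟨a, ha, hmin⟩ := (isCompact_sphere (0 : E) 1).exists_isMinOn hne (hcont.mono hS)
  obtain ⟨b, hb, hmax⟩ := (isCompact_sphere (0 : E) 1).exists_isMaxOn hne (hcont.mono hS)
  refine ⟨H a, H b, hpos a (hS ha), hpos b (hS hb), fun x => ?_⟩
  rcases eq_or_ne x 0 with rfl | hx
  · simp [hH0]
  have hnx : 0 < ‖x‖ := norm_pos_iff.2 hx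
  have hu : ‖x‖⁻¹ • x ∈ Metric.sphere (0 : E) 1 := by
    simp [norm_smul, inv_mul_cancel₀ hnx.ne']
  have hHx : H x = ‖x‖ * H (‖x‖⁻¹ • x) := by
    rw [← hhom _ (norm_nonneg x), smul_inv_smul₀ hnx.ne']
  rw [hHx, mul_comm (H a), mul_comm (H b)]
  exact ⟨mul_le_mul_of_nonneg_left (hmin hu) hnx.le, mul_le_mul_of_nonneg_left (hmax hu) hnx.le⟩

theorem hasDerivAt_line (x v : E) (t : ℝ) : HasDerivAt (fun s : ℝ => x + s • v) v t := by
  simpa using ((hasDerivAt_id t).smul_const v).const_add x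

theorem hasDerivAt_rpow_comp_line {p : ℝ} {x v : E} {t : ℝ}
    (hd : DifferentiableAt ℝ H (x + t • v)) (hpos : 0 < H (x + t • v)) :
    HasDerivAt (fun s : ℝ => H (x + s • v) ^ p)
      (p * H (x + t • v) ^ (p - 1) * fderiv ℝ H (x + t • v) v) t := by
  have h := (hd.hasFDerivAt.comp_hasDerivAt t (hasDerivAt_line x v t)).rpow_const
    (p := p) (Or.inl hpos.ne')
  simpa [Function.comp_def, mul_comm, mul_left_comm, mul_assoc] using h

theorem hasDerivAt_rpow_comp_line_deriv {p : ℝ} {x v : E} {t : ℝ}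
    (hd : ContDiffAt ℝ 2 H (x + t • v)) (hpos : 0 < H (x + t • v)) :
    HasDerivAt (fun s : ℝ => p * H (x + s • v) ^ (p - 1) * fderiv ℝ H (x + s • v) v)
      (p * H (x + t • v) ^ (p - 2) * ((p - 1) * fderiv ℝ H (x + t • v) v ^ 2 +
        H (x + t • v) * fderiv ℝ (fderiv ℝ H) (x + t • v) v v)) t := by
  have hD1 := hasDerivAt_rpow_comp_line (p := p - 1) (hd.differentiableAt two_ne_zero) hpos
  have hD2 : HasDerivAt (fun s : ℝ => fderiv ℝ H (x + s • v) v)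
      (fderiv ℝ (fderiv ℝ H) (x + t • v) v v) t := by
    have hdd : DifferentiableAt ℝ (fderiv ℝ H) (x + t • v) :=
      (hd.fderiv_right (m := 1) (by norm_num)).differentiableAt one_ne_zero
    have h := hdd.hasFDerivAt.comp_hasDerivAt t (hasDerivAt_line x v t)
    exact (h.clm_apply (hasDerivAt_const t v)).congr_deriv (by simp)
  refine ((hD1.const_mul p).fun_mul hD2).congr_deriv ?_
  have hexp : H (x + t • v) ^ (p - 1) = H (x + t • v) ^ (p - 2) * H (x + t • v) := by
    rw [← Real.rpow_add_one hpos.ne']; ring_nf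
  rw [show p - 1 - 1 = p - 2 by ring, hexp]
  ring

theorem rpow_add_le_of_zero_notMem_segment
    (hhom : ∀ t : ℝ, 0 ≤ t → ∀ x, H (t • x) = t * H x) (hpos : ∀ x, x ≠ 0 → 0 < H x)
    (hC2 : ContDiffOn ℝ 2 H {0}ᶜ) {lam : ℝ} (hlam : 0 ≤ lam)
    (hell : ∀ ξ, H ξ = 1 → ∀ ζ, fderiv ℝ H ξ ζ = 0 →
      lam * ‖ζ‖ ^ 2 ≤ fderiv ℝ (fderiv ℝ H) ξ ζ ζ)
    {m : ℝ} (hm : 0 ≤ m) (hmH : ∀ x, m * ‖x‖ ≤ H x) {p : ℝ} (hp1 : 1 ≤ p) (hp2 : p ≤ 2)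
    {η η' : E} (hseg : (0 : E) ∉ segment ℝ η' η) {L : ℝ}
    (hL : ∀ x ∈ segment ℝ η' η, H x ≤ L) :
    H η' ^ p + p * (H η' ^ (p - 1) * fderiv ℝ H η' (η - η')) +
        p * (min lam ((p - 1) * m ^ 2) / 2) * L ^ (p - 2) * ‖η - η'‖ ^ 2 / 2 ≤ H η ^ p := by
  set v := η - η'
  set κ := min lam ((p - 1) * m ^ 2) / 2
  have hγ : ∀ t ∈ Icc (0 : ℝ) 1, η' + t • v ∈ segment ℝ η' η := fun t ht => by
    rw [segment_eq_image']; exact mem_image_of_mem _ ht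
  have hγ0 : ∀ t ∈ Icc (0 : ℝ) 1, η' + t • v ≠ 0 := fun t ht h => hseg (h ▸ hγ t ht)
  have hγC2 : ∀ t ∈ Icc (0 : ℝ) 1, ContDiffAt ℝ 2 H (η' + t • v) := fun t ht =>
    hC2.contDiffAt (isOpen_compl_singleton.mem_nhds (hγ0 t ht))
  have hB : ∀ t ∈ Icc (0 : ℝ) 1, p * κ * L ^ (p - 2) * ‖v‖ ^ 2 ≤
      p * H (η' + t • v) ^ (p - 2) * ((p - 1) * fderiv ℝ H (η' + t • v) v ^ 2 +
        H (η' + t • v) * fderiv ℝ (fderiv ℝ H) (η' + t • v) v v) := by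
    intro t ht
    have hHγ := hpos _ (hγ0 t ht)
    have hQ := min_mul_norm_sq_le_of_homogeneous hhom hlam hell hm (by linarith : 0 ≤ p - 1)
      (hmH _) hHγ (hγC2 t ht) v
    have hLγ : L ^ (p - 2) ≤ H (η' + t • v) ^ (p - 2) :=
      Real.rpow_le_rpow_of_nonpos hHγ (hL _ (hγ t ht)) (by linarith)
    have hκ : 0 ≤ κ := by positivity
    calc p * κ * L ^ (p - 2) * ‖v‖ ^ 2 = p * L ^ (p - 2) * (κ * ‖v‖ ^ 2) := by ring
      _ ≤ p * H (η' + t • v) ^ (p - 2) * (κ * ‖v‖ ^ 2) := by gcongr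
      _ ≤ _ := by gcongr
  have h := add_add_half_le_of_le_second_deriv
    (fun t ht => hasDerivAt_rpow_comp_line (p := p)
      ((hγC2 t ht).differentiableAt two_ne_zero) (hpos _ (hγ0 t ht)))
    (fun t ht => hasDerivAt_rpow_comp_line_deriv (p := p) (hγC2 t ht) (hpos _ (hγ0 t ht))) hB
  have h0 : η' + (0 : ℝ) • v = η' := by simp
  have h1 : η' + (1 : ℝ) • v = η := by simp [v]
  simp only [h0, h1] at h
  linarith

theorem le_mul_add_of_mem_segment {m M : ℝ} (hm : 0 < m) (hM : 0 ≤ M)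
    (hmH : ∀ x, m * ‖x‖ ≤ H x) (hMH : ∀ x, H x ≤ M * ‖x‖) {η η' x : E}
    (hx : x ∈ segment ℝ η' η) : H x ≤ M / m * (H η + H η') := by
  have hx' : ‖x‖ ≤ max ‖η'‖ ‖η‖ :=
    convexOn_univ_norm.le_on_segment (mem_univ _) (mem_univ _) hx
  have hη : ‖η‖ ≤ H η / m := (le_div_iff₀ hm).2 (by linarith [hmH η])
  have hη' : ‖η'‖ ≤ H η' / m := (le_div_iff₀ hm).2 (by linarith [hmH η'])
  calc H x ≤ M * ‖x‖ := hMH x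
    _ ≤ M * (H η / m + H η' / m) := by
        gcongr
        exact hx'.trans (max_le (by linarith [norm_nonneg η]) (by linarith [norm_nonneg η']))
    _ = M / m * (H η + H η') := by ring

theorem rpow_add_le_of_smul_neg_eq
    (hhom : ∀ t : ℝ, 0 ≤ t → ∀ x, H (t • x) = t * H x) (heven : ∀ x, H (-x) = H x)
    {η η' : E} (hη' : 0 < H η') (hd : DifferentiableAt ℝ H η') {p : ℝ} (hp1 : 1 ≤ p)
    (hp2 : p ≤ 2) {r : ℝ} (hr : 0 ≤ r) (hη : r • -η' = η) {C : ℝ} (hC : C ≤ (p - 1) / 2) :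
    H η' ^ p + p * (H η' ^ (p - 1) * fderiv ℝ H η' (η - η')) +
        C * (H η + H η') ^ (p - 2) * H (η - η') ^ 2 ≤ H η ^ p := by
  subst hη
  set h := H η'
  have hHη : H (r • -η') = r * h := by rw [hhom r hr, heven]
  have hv : r • -η' - η' = (1 + r) • -η' := by module
  have hHv : H ((1 + r) • -η') = (1 + r) * h := by rw [hhom _ (by linarith), heven]
  have hD : fderiv ℝ H η' ((1 + r) • -η') = -((1 + r) * h) := by
    rw [smul_neg, map_neg, map_smul, fderiv_apply_self_of_homogeneous hhom hd, smul_eq_mul]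
  have hlin : h ^ (p - 1) * -((1 + r) * h) = -((1 + r) * h ^ p) := by
    conv_rhs => rw [← sub_add_cancel p 1, Real.rpow_add_one hη'.ne']
    ring
  rw [hv, hHη, hHv, hD, hlin, show r * h + h = (1 + r) * h by ring, mul_assoc C,
    rpow_sub_two_mul_sq (by positivity) (by linarith), Real.mul_rpow hr hη'.le,
    Real.mul_rpow (by linarith) hη'.le]
  have hC' : C * (1 + r) ^ p ≤ r ^ p + p * r + (p - 1) :=
    (mul_le_mul_of_nonneg_right hC (Real.rpow_nonneg (by linarith) p)).trans
      (sub_one_div_two_mul_one_add_rpow_le hp1 hp2 hr)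
  nlinarith [mul_le_mul_of_nonneg_right hC' (Real.rpow_nonneg hη'.le p)]

theorem exists_rpow_strong_convexity [FiniteDimensional ℝ E]
    (hhom : ∀ t : ℝ, 0 ≤ t → ∀ x, H (t • x) = t * H x) (heven : ∀ x, H (-x) = H x)
    (hpos : ∀ x, x ≠ 0 → 0 < H x) (hC2 : ContDiffOn ℝ 2 H {0}ᶜ) {lam : ℝ} (hlam : 0 < lam)
    (hell : ∀ ξ, H ξ = 1 → ∀ ζ, fderiv ℝ H ξ ζ = 0 →
      lam * ‖ζ‖ ^ 2 ≤ fderiv ℝ (fderiv ℝ H) ξ ζ ζ)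
    {p : ℝ} (hp1 : 1 < p) (hp2 : p ≤ 2) :
    ∃ C : ℝ, 0 < C ∧ ∀ η η' : E,
      H η' ^ p + p * (H η' ^ (p - 1) * fderiv ℝ H η' (η - η')) +
        C * (H η + H η') ^ (p - 2) * H (η - η') ^ 2 ≤ H η ^ p := by
  obtain ⟨m, M, hm, hM, hmM⟩ := exists_mul_norm_le_and_le_mul_norm hhom hpos hC2.continuousOn
  have hmH : ∀ x, m * ‖x‖ ≤ H x := fun x => (hmM x).1
  have hMH : ∀ x, H x ≤ M * ‖x‖ := fun x => (hmM x).2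
  have hH0 : H 0 = 0 := by simpa using hhom 0 le_rfl 0
  have hp0 : p ≠ 0 := by positivity
  set κ := min lam ((p - 1) * m ^ 2) / 2
  have hκ : 0 < κ := by have := sub_pos.2 hp1; positivity
  -- `(p - 1) / 2` serves the collinear case, the second bound absorbs the Taylor remainder.
  refine ⟨min ((p - 1) / 2) (p * κ * (M / m) ^ (p - 2) / (2 * M ^ 2)), ?_, fun η η' => ?_⟩
  · have := sub_pos.2 hp1; positivity
  set C := min ((p - 1) / 2) (p * κ * (M / m) ^ (p - 2) / (2 * M ^ 2))
  by_cases hseg : (0 : E) ∈ segment ℝ η' η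
  · rcases eq_or_ne η' 0 with rfl | hη'
    · have hHη := (hmH η).trans' (by positivity)
      have hC1 : C ≤ 1 := (min_le_left _ _).trans (by linarith)
      rw [hH0, Real.zero_rpow hp0, Real.zero_rpow (by linarith), add_zero, sub_zero,
        mul_assoc C, rpow_sub_two_mul_sq hHη hp0]
      nlinarith [Real.rpow_nonneg hHη p]
    · obtain ⟨r, hr, hη⟩ := (mem_segment_iff_sameRay.1 hseg).exists_nonneg_left (by simpa using hη')
      rw [zero_sub, sub_zero] at hη
      exact rpow_add_le_of_smul_neg_eq hhom heven (hpos η' hη')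
        ((hC2.contDiffAt (isOpen_compl_singleton.mem_nhds hη')).differentiableAt two_ne_zero)
        hp1.le hp2 hr hη (min_le_left _ _)
  · have htaylor : H η' ^ p + p * (H η' ^ (p - 1) * fderiv ℝ H η' (η - η')) +
        p * κ * (M / m * (H η + H η')) ^ (p - 2) * ‖η - η'‖ ^ 2 / 2 ≤ H η ^ p :=
      rpow_add_le_of_zero_notMem_segment hhom hpos hC2 hlam.le hell hm.le hmH hp1.le hp2 hseg
        (fun x hx => le_mul_add_of_mem_segment hm hM.le hmH hMH hx)
    have hK : 0 ≤ H η + H η' := add_nonneg ((hmH η).trans' (by positivity))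
      ((hmH η').trans' (by positivity))
    have hv : H (η - η') ^ 2 ≤ M ^ 2 * ‖η - η'‖ ^ 2 := by
      rw [← mul_pow]
      exact pow_le_pow_left₀ ((hmH _).trans' (by positivity)) (hMH _) 2
    have hrem : C * (H η + H η') ^ (p - 2) * H (η - η') ^ 2 ≤
        p * κ * (M / m * (H η + H η')) ^ (p - 2) * ‖η - η'‖ ^ 2 / 2 :=
      calc C * (H η + H η') ^ (p - 2) * H (η - η') ^ 2
          ≤ p * κ * (M / m) ^ (p - 2) / (2 * M ^ 2) * (H η + H η') ^ (p - 2) *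
              (M ^ 2 * ‖η - η'‖ ^ 2) := by
            gcongr
            exact min_le_right _ _
        _ = p * κ * (M / m * (H η + H η')) ^ (p - 2) * ‖η - η'‖ ^ 2 / 2 := by
            rw [Real.mul_rpow (by positivity) hK]
            field_simp
    linarith

end Homogeneous

theorem inner_aVec {N : ℕ} {H : EuclideanSpace ℝ (Fin N) → ℝ} (hH0 : H 0 = 0) {p : ℝ}
    (hp : 1 < p) (η v : EuclideanSpace ℝ (Fin N)) :
    ⟪aVec H p η, v⟫ = H η ^ (p - 1) * fderiv ℝ H η v := by
  unfold aVec
  split_ifs with h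
  · simp [h, hH0, Real.zero_rpow (by linarith : p - 1 ≠ 0)]
  · rw [real_inner_smul_left, gradient, InnerProductSpace.toDual_symm_apply]

theorem statement_8_general {N : ℕ}
    (H : EuclideanSpace ℝ (Fin N) → ℝ)
    (hH0 : H 0 = 0)
    (hHC2 : ContDiffOn ℝ 2 H {(0 : EuclideanSpace ℝ (Fin N))}ᶜ)
    (hHeven : ∀ ξ : EuclideanSpace ℝ (Fin N), H (-ξ) = H ξ)
    (hHpos : ∀ ξ : EuclideanSpace ℝ (Fin N), ξ ≠ 0 → 0 < H ξ)
    (hHhom : ∀ ξ : EuclideanSpace ℝ (Fin N), ξ ≠ 0 → ∀ t : ℝ, 0 < t → H (t • ξ) = t * H ξ)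
    (hHell : ∃ lam : ℝ, 0 < lam ∧ ∀ ξ : EuclideanSpace ℝ (Fin N), H ξ = 1 →
      ∀ ζ : EuclideanSpace ℝ (Fin N), ⟪gradient H ξ, ζ⟫ = 0 →
        lam * ‖ζ‖ ^ 2 ≤ iteratedFDeriv ℝ 2 H ξ ![ζ, ζ])
    (p : ℝ) (hp1 : 1 < p) (hp2 : p < 2) :
    ∃ C : ℝ, 0 < C ∧ ∀ η η' : EuclideanSpace ℝ (Fin N), 0 < ‖η‖ + ‖η'‖ →
      (H η') ^ p + p * ⟪aVec H p η', η - η'⟫ +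
          C * (H η + H η') ^ (p - 2) * (H (η - η')) ^ 2 ≤ (H η) ^ p := by
  obtain ⟨lam, hlam, hell⟩ := hHell
  have hhom : ∀ t : ℝ, 0 ≤ t → ∀ ξ, H (t • ξ) = t * H ξ := by
    intro t ht ξ
    rcases eq_or_ne ξ 0 with rfl | hξ
    · simp [hH0]
    rcases ht.eq_or_lt with rfl | ht
    · simp [hH0]
    · exact hHhom ξ hξ t ht
  have hell' : ∀ ξ, H ξ = 1 → ∀ ζ, fderiv ℝ H ξ ζ = 0 →
      lam * ‖ζ‖ ^ 2 ≤ fderiv ℝ (fderiv ℝ H) ξ ζ ζ := fun ξ hξ ζ hζ => by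
    simpa [iteratedFDeriv_two_apply] using
      hell ξ hξ ζ (by rwa [gradient, InnerProductSpace.toDual_symm_apply])
  obtain ⟨C, hC, hconv⟩ :=
    exists_rpow_strong_convexity hhom hHeven hHpos hHC2 hlam hell' hp1 hp2.le
  exact ⟨C, hC, fun η η' _ => by simpa only [inner_aVec hH0 hp1] using hconv η η'⟩

theorem statement_8 {N : ℕ} (hN : 2 ≤ N)
    (H : EuclideanSpace ℝ (Fin N) → ℝ)
    (hH0 : H 0 = 0)
    (hHnonneg : ∀ ξ : EuclideanSpace ℝ (Fin N), 0 ≤ H ξ)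
    (hHC2 : ContDiffOn ℝ 2 H {(0 : EuclideanSpace ℝ (Fin N))}ᶜ)
    (hHeven : ∀ ξ : EuclideanSpace ℝ (Fin N), H (-ξ) = H ξ)
    (hHpos : ∀ ξ : EuclideanSpace ℝ (Fin N), ξ ≠ 0 → 0 < H ξ)
    (hHhom : ∀ ξ : EuclideanSpace ℝ (Fin N), ξ ≠ 0 → ∀ t : ℝ, 0 < t → H (t • ξ) = t * H ξ)
    (hHell : ∃ lam : ℝ, 0 < lam ∧ ∀ ξ : EuclideanSpace ℝ (Fin N), H ξ = 1 →
      ∀ ζ : EuclideanSpace ℝ (Fin N), ⟪gradient H ξ, ζ⟫ = 0 →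
        lam * ‖ζ‖ ^ 2 ≤ iteratedFDeriv ℝ 2 H ξ ![ζ, ζ])
    (p : ℝ) (hp1 : 1 < p) (hp2 : p < 2) :
    ∃ C : ℝ, 0 < C ∧ ∀ η η' : EuclideanSpace ℝ (Fin N), 0 < ‖η‖ + ‖η'‖ →
      (H η') ^ p + p * ⟪aVec H p η', η - η'⟫ +
          C * (H η + H η') ^ (p - 2) * (H (η - η')) ^ 2 ≤ (H η) ^ p :=
  statement_8_general H hH0 hHC2 hHeven hHpos hHhom hHell p hp1 hp2
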